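/- The rewrite system given by the proof-conversion rules of HTLG natural deduction (the \ detour conversion and the ⊸ detour/beta conversion, together with the symmetric / conversion) is strongly normalising: there are no infinite reduction sequences on HTLG natural deduction proofs. -/
import Mathlib


/-! Core syntax of hybrid type-logical grammars (HTLG):
formulas, prosodic lambda terms, beta/eta reduction, and βη-equivalence
(including the string equations for `+` and `ε`). -/

/-- Formulas of HTLG: the special lexical formula `w`, atoms, the Lambek
slashes `A/B` (`rdiv A B`) and `A\B` (`ldiv A B`), and linear implication
`A ⊸ B` (`limp A B`). -/
inductive Fm : Type
  | w : Fm
  | atom : ℕ → Fm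
  | rdiv : Fm → Fm → Fm
  | ldiv : Fm → Fm → Fm
  | limp : Fm → Fm → Fm
  deriving DecidableEq

/-- Prosodic lambda terms over the string algebra: variables, the empty
string `ε`, concatenation `+`, application and abstraction. -/
inductive Tm : Type
  | var : ℕ → Tm
  | eps : Tm
  | plus : Tm → Tm → Tm
  | app : Tm → Tm → Tm
  | lam : ℕ → Tm → Tm
  deriving DecidableEq

namespace Tm

/-- Free variables of a term. -/
def fv : Tm → Finset ℕ
  | .var x => {x}
  | .eps => ∅
  | .plus M N => fv M ∪ fv N
  | .app M N => fv M ∪ fv N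
  | .lam x M => fv M \ {x}

/-- Number of free occurrences of a variable in a term. -/
def countVar : Tm → ℕ → ℕ
  | .var y, x => if y = x then 1 else 0
  | .eps, _ => 0
  | .plus M N, x => countVar M x + countVar N x
  | .app M N, x => countVar M x + countVar N x
  | .lam y M, x => if y = x then 0 else countVar M x

/-- Substitution `M[x := N]`. -/
def subst : Tm → ℕ → Tm → Tm
  | .var y, x, N => if y = x then N else .var y
  | .eps, _, _ => .eps
  | .plus M₁ M₂, x, N => .plus (subst M₁ x N) (subst M₂ x N)
  | .app M₁ M₂, x, N => .app (subst M₁ x N) (subst M₂ x N)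
  | .lam y M, x, N => if y = x then .lam y M else .lam y (subst M x N)

/-- Number of lambda abstractions in a term. -/
def lamCount : Tm → ℕ
  | .var _ => 0
  | .eps => 0
  | .plus M N => lamCount M + lamCount N
  | .app M N => lamCount M + lamCount N
  | .lam _ M => lamCount M + 1

/-- Linear lambda terms: every binder binds exactly one occurrence of its
variable and every free variable occurs exactly once. -/
inductive Linear : Tm → Prop
  | var (x : ℕ) : Linear (.var x)
  | eps : Linear .eps
  | plus {M N : Tm} : Linear M → Linear N → Disjoint M.fv N.fv → Linear (.plus M N)
  | app {M N : Tm} : Linear M → Linear N → Disjoint M.fv N.fv → Linear (.app M N)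
  | lam {x : ℕ} {M : Tm} : Linear M → M.countVar x = 1 → Linear (.lam x M)

/-- One-step beta reduction (closed under congruence). -/
inductive Beta : Tm → Tm → Prop
  | beta (x : ℕ) (M N : Tm) : Beta (.app (.lam x M) N) (M.subst x N)
  | plusL {M M' : Tm} (N : Tm) : Beta M M' → Beta (.plus M N) (.plus M' N)
  | plusR (M : Tm) {N N' : Tm} : Beta N N' → Beta (.plus M N) (.plus M N')
  | appL {M M' : Tm} (N : Tm) : Beta M M' → Beta (.app M N) (.app M' N)
  | appR (M : Tm) {N N' : Tm} : Beta N N' → Beta (.app M N) (.app M N')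
  | lam (x : ℕ) {M M' : Tm} : Beta M M' → Beta (.lam x M) (.lam x M')

/-- One-step beta or eta reduction (closed under congruence); the eta rule
carries the usual side condition `x ∉ fv P`. -/
inductive Step : Tm → Tm → Prop
  | beta (x : ℕ) (M N : Tm) : Step (.app (.lam x M) N) (M.subst x N)
  | eta {x : ℕ} {P : Tm} : x ∉ P.fv → Step (.lam x (.app P (.var x))) P
  | plusL {M M' : Tm} (N : Tm) : Step M M' → Step (.plus M N) (.plus M' N)
  | plusR (M : Tm) {N N' : Tm} : Step N N' → Step (.plus M N) (.plus M N')
  | appL {M M' : Tm} (N : Tm) : Step M M' → Step (.app M N) (.app M' N)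
  | appR (M : Tm) {N N' : Tm} : Step N N' → Step (.app M N) (.app M N')
  | lam (x : ℕ) {M M' : Tm} : Step M M' → Step (.lam x M) (.lam x M')

/-- βη-equivalence of prosodic terms (together with the string equations:
associativity of `+` and `ε` as unit, reflecting that `+` denotes string
concatenation). -/
inductive BetaEta : Tm → Tm → Prop
  | refl (M : Tm) : BetaEta M M
  | step {M N : Tm} : Step M N → BetaEta M N
  | assoc (M N P : Tm) : BetaEta (.plus (.plus M N) P) (.plus M (.plus N P))
  | epsL (M : Tm) : BetaEta (.plus .eps M) M
  | epsR (M : Tm) : BetaEta (.plus M .eps) M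
  | plusL {M M' : Tm} (N : Tm) : BetaEta M M' → BetaEta (.plus M N) (.plus M' N)
  | plusR (M : Tm) {N N' : Tm} : BetaEta N N' → BetaEta (.plus M N) (.plus M N')
  | appL {M M' : Tm} (N : Tm) : BetaEta M M' → BetaEta (.app M N) (.app M' N)
  | appR (M : Tm) {N N' : Tm} : BetaEta N N' → BetaEta (.app M N) (.app M N')
  | lam (x : ℕ) {M M' : Tm} : BetaEta M M' → BetaEta (.lam x M) (.lam x M')
  | symm {M N : Tm} : BetaEta M N → BetaEta N M
  | trans {M N P : Tm} : BetaEta M N → BetaEta N P → BetaEta M P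

end Tm

/-- The variables declared in a context. -/
def ctxVars (Γ : List (ℕ × Fm)) : List ℕ := Γ.map Prod.fst
/-- HTLG natural deduction proof trees, as explicit objects.  Leaves are
axioms `x : A` or lexical entries; internal nodes are the elimination and
introduction rules for `/`, `\` and `⊸` and the βη rule. -/
inductive PF : Type
  | ax (x : ℕ) (A : Fm)
  | lex (p : ℕ) (M : Tm) (A : Fm)
  | limpE (minor major : PF)
  | limpI (x : ℕ) (d : PF)
  | rdivE (major minor : PF)
  | rdivI (p : ℕ) (d : PF)
  | ldivE (minor major : PF)
  | ldivI (p : ℕ) (d : PF)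
  | betaEta (M : Tm) (d : PF)
  deriving DecidableEq

namespace PF

/-- Size of a proof (number of rule applications). -/
def size : PF → ℕ
  | .ax _ _ => 1
  | .lex _ _ _ => 1
  | .limpE d e => size d + size e + 1
  | .limpI _ d => size d + 1
  | .rdivE d e => size d + size e + 1
  | .rdivI _ d => size d + 1
  | .ldivE d e => size d + size e + 1
  | .ldivI _ d => size d + 1
  | .betaEta _ d => size d + 1

/-- Number of axiom leaves for the hypothesis variable `x`. -/
def axCount : PF → ℕ → ℕ
  | .ax y _, x => if y = x then 1 else 0
  | .lex _ _ _, _ => 0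
  | .limpE d e, x => axCount d x + axCount e x
  | .limpI y d, x => if y = x then 0 else axCount d x
  | .rdivE d e, x => axCount d x + axCount e x
  | .rdivI y d, x => if y = x then 0 else axCount d x
  | .ldivE d e, x => axCount d x + axCount e x
  | .ldivI y d, x => if y = x then 0 else axCount d x
  | .betaEta _ d, x => axCount d x

/-- Substitute the proof `δ` for the hypothesis (axiom leaf) `x`
(the proof-level substitution of the Substitution Lemma). -/
def psubst (δ : PF) (x : ℕ) : PF → PF
  | .ax y A => if y = x then δ else .ax y A
  | .lex p M A => .lex p M A
  | .limpE d e => .limpE (psubst δ x d) (psubst δ x e)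
  | .limpI y d => if y = x then .limpI y d else .limpI y (psubst δ x d)
  | .rdivE d e => .rdivE (psubst δ x d) (psubst δ x e)
  | .rdivI y d => if y = x then .rdivI y d else .rdivI y (psubst δ x d)
  | .ldivE d e => .ldivE (psubst δ x d) (psubst δ x e)
  | .ldivI y d => if y = x then .ldivI y d else .ldivI y (psubst δ x d)
  | .betaEta M d => .betaEta M (psubst δ x d)

/-- The detour conversion rules of HTLG natural deduction: an introduction
rule immediately followed by the corresponding elimination rule is replaced
by the substitution of the minor premiss proof for the discharged hypothesis
(for `⊸`, this corresponds to a beta reduction on the proof term).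
The relation is closed under congruence (conversions may be applied to any
subproof).  The hypothesis `axCount d x = 1` records the linearity of HTLG
proofs: the discharged hypothesis occurs exactly once. -/
inductive Conv : PF → PF → Prop
  | ldiv {d₁ d₂ : PF} {x : ℕ} (h : d₂.axCount x = 1) :
      Conv (.ldivE d₁ (.ldivI x d₂)) (psubst d₁ x d₂)
  | rdiv {d₁ d₂ : PF} {x : ℕ} (h : d₂.axCount x = 1) :
      Conv (.rdivE (.rdivI x d₂) d₁) (psubst d₁ x d₂)
  | limp {d₁ d₂ : PF} {x : ℕ} (h : d₂.axCount x = 1) :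
      Conv (.limpE d₁ (.limpI x d₂)) (psubst d₁ x d₂)
  | limpEL {d d' : PF} (e : PF) : Conv d d' → Conv (.limpE d e) (.limpE d' e)
  | limpER (d : PF) {e e' : PF} : Conv e e' → Conv (.limpE d e) (.limpE d e')
  | limpI (x : ℕ) {d d' : PF} : Conv d d' → Conv (.limpI x d) (.limpI x d')
  | rdivEL {d d' : PF} (e : PF) : Conv d d' → Conv (.rdivE d e) (.rdivE d' e)
  | rdivER (d : PF) {e e' : PF} : Conv e e' → Conv (.rdivE d e) (.rdivE d e')
  | rdivI (p : ℕ) {d d' : PF} : Conv d d' → Conv (.rdivI p d) (.rdivI p d')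
  | ldivEL {d d' : PF} (e : PF) : Conv d d' → Conv (.ldivE d e) (.ldivE d' e)
  | ldivER (d : PF) {e e' : PF} : Conv e e' → Conv (.ldivE d e) (.ldivE d e')
  | ldivI (p : ℕ) {d d' : PF} : Conv d d' → Conv (.ldivI p d) (.ldivI p d')
  | betaEta (M : Tm) {d d' : PF} : Conv d d' → Conv (.betaEta M d) (.betaEta M d')

/-- A proof is normal when no conversion applies to it. -/
def Normal (d : PF) : Prop := ¬ ∃ e, Conv d e

end PF

namespace PF

lemma size_pos (d : PF) : 0 < d.size := by
  cases d <;> simp [size]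

lemma size_psubst (δ : PF) (x : ℕ) (d : PF) :
    (psubst δ x d).size + d.axCount x = d.size + d.axCount x * δ.size := by
  induction d with
  | ax y A => by_cases h : y = x <;> simp [psubst, size, axCount, h] <;> omega
  | lex p M A => simp [psubst, size, axCount]
  | limpE d e hd he => simp [psubst, size, axCount]; ring_nf; omega
  | limpI y d hd =>
      by_cases h : y = x <;> simp [psubst, size, axCount, h] <;> omega
  | rdivE d e hd he => simp [psubst, size, axCount]; ring_nf; omega
  | rdivI y d hd =>
      by_cases h : y = x <;> simp [psubst, size, axCount, h] <;> omega
  | ldivE d e hd he => simp [psubst, size, axCount]; ring_nf; omega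
  | ldivI y d hd =>
      by_cases h : y = x <;> simp [psubst, size, axCount, h] <;> omega
  | betaEta M d hd => simp [psubst, size, axCount]; omega

lemma size_decrease {d e : PF} (h : Conv d e) : e.size < d.size := by
  induction h with
  | ldiv h =>
      rename_i d₁ d₂ x
      have hs := size_psubst d₁ x d₂
      rw [h, one_mul] at hs
      have := size_pos d₁
      simp [size]; omega
  | rdiv h =>
      rename_i d₁ d₂ x
      have hs := size_psubst d₁ x d₂
      rw [h, one_mul] at hs
      have := size_pos d₁
      simp [size]; omega
  | limp h =>
      rename_i d₁ d₂ x
      have hs := size_psubst d₁ x d₂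
      rw [h, one_mul] at hs
      have := size_pos d₁
      simp [size]; omega
  | _ => simp [size]; omega

end PF

/-- **Strong normalisation of HTLG natural deduction** (Theorem 1).  The
rewrite system given by the detour conversion rules for `\`, `/` and `⊸` is
strongly normalising: there are no infinite reduction sequences on HTLG
natural deduction proofs. -/
theorem PF.strong_normalisation :
    ¬ ∃ f : ℕ → PF, ∀ n, PF.Conv (f n) (f (n + 1)) := by
  rintro ⟨f, hf⟩
  have : ∀ n, (f (n + 1)).size < (f n).size := fun n => PF.size_decrease (hf n)
  have hb : ∀ n, (f n).size + n ≤ (f 0).size := by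
    intro n
    induction n with
    | zero => omega
    | succ k ih => have := this k; omega
  have := hb ((f 0).size + 1)
  omega
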